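/- Gentle sequential measurement step: for density matrices ρ, σ ∈ ℂ^{d×d} and an orthogonal projector A with tr(σA) > 0, the infidelity satisfies 1 − F(ρ, σ|A) ≤ (1 − F(ρ,σ)) + tr(ρ(Id−A)). -/

import Mathlib

open Matrix ComplexOrder

/-- The positive semidefinite square root of a positive semidefinite matrix
(removed from Mathlib; restored with its December 2024 definition). -/
noncomputable def Matrix.PosSemidef.sqrt {n : Type*} [Fintype n] [DecidableEq n]
    {𝕜 : Type*} [RCLike 𝕜] {A : Matrix n n 𝕜} (hA : A.PosSemidef) : Matrix n n 𝕜 :=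
  hA.1.eigenvectorUnitary.1 * diagonal ((↑) ∘ (√·) ∘ hA.1.eigenvalues) *
  (star hA.1.eigenvectorUnitary : Matrix n n 𝕜)

/-- The Schatten 1-norm (trace norm): ‖M‖₁ = tr √(MᴴM). -/
noncomputable def traceNorm {n m : Type*} [Fintype n] [Fintype m] [DecidableEq m]
    (M : Matrix n m ℂ) : ℝ :=
  ((Matrix.posSemidef_conjTranspose_mul_self M).sqrt.trace).re

/-!
Write `R = √ρ`, `S = √σ`, `C = √(σ|A)` and `t = tr(σA)`. By polar decomposition there is a
unitary `U` with `‖RS‖₁ = Re tr(URS)`; split `RS = RAS + R(1-A)S`. Since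
`(SA)ᴴ(SA) = AσA = t C²`, polar decomposition again gives `SA = √t W C` with `W` unitary, so the
first term is at most `√t ‖RC‖₁`. The second is `tr(((1-A)R)ᴴ (1-A)SU)`, at most
`√(tr ρ(1-A)) √(1-t)` by Cauchy–Schwarz for the Hilbert–Schmidt inner product. Cauchy–Schwarz
in `ℝ²` then turns `√F(ρ,σ) ≤ √t √F(ρ,σ|A) + √(tr ρ(1-A)) √(1-t)` into
`F(ρ,σ) ≤ F(ρ,σ|A) + tr ρ(1-A)`.
-/

section Sqrt

open scoped MatrixOrder

variable {n 𝕜 : Type*} [Fintype n] [DecidableEq n] [RCLike 𝕜] {A : Matrix n n 𝕜}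

lemma Matrix.PosSemidef.sqrt_eq_cfcSqrt (hA : A.PosSemidef) : hA.sqrt = CFC.sqrt A := by
  rw [CFC.sqrt_eq_cfc, cfc_nnreal_eq_real _ A hA.nonneg, hA.1.cfc_eq]
  simp only [IsHermitian.cfc, Unitary.conjStarAlgAut_apply, Matrix.PosSemidef.sqrt]
  congr 3
  funext i
  simp [Real.coe_sqrt, Real.coe_toNNReal', max_eq_left (hA.eigenvalues_nonneg i)]

lemma Matrix.PosSemidef.posSemidef_sqrt (hA : A.PosSemidef) : hA.sqrt.PosSemidef := by
  rw [hA.sqrt_eq_cfcSqrt]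
  exact (CFC.sqrt_nonneg A).posSemidef

lemma Matrix.PosSemidef.sqrt_mul_self (hA : A.PosSemidef) : hA.sqrt * hA.sqrt = A := by
  rw [hA.sqrt_eq_cfcSqrt]
  exact CFC.sqrt_mul_sqrt_self A hA.nonneg

end Sqrt

namespace ContinuousLinearMap

variable {𝕜 H : Type*} [RCLike 𝕜] [NormedAddCommGroup H] [InnerProductSpace 𝕜 H]
  [CompleteSpace H] [FiniteDimensional 𝕜 H]

/- `T x ↦ S x` is a well-defined isometry from `range T` into `H`; in finite dimension it extends
to a unitary. -/
theorem exists_mem_unitary_mul_eq_of_star_mul_self_eq {T S : H →L[𝕜] H}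
    (h : star T * T = star S * S) : ∃ u ∈ unitary (H →L[𝕜] H), S = u * T := by
  have hnorm (x : H) : ‖S x‖ = ‖T x‖ := by
    simp only [apply_norm_eq_sqrt_inner_adjoint_left, ← star_eq_adjoint, ← mul_def, h]
  set f : H →ₗ[𝕜] H := (T : H →ₗ[𝕜] H)
  set g : H →ₗ[𝕜] H := (S : H →ₗ[𝕜] H)
  have hker : LinearMap.ker f ≤ LinearMap.ker g := fun x hx ↦
    norm_eq_zero.mp <| (hnorm x).trans <| by rw [show T x = 0 from hx, norm_zero]
  let L₀ : LinearMap.range f →ₗ[𝕜] H :=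
    (LinearMap.ker f).liftQ g hker ∘ₗ f.quotKerEquivRange.symm.toLinearMap
  have hL₀ (x : H) : L₀ ⟨f x, f.mem_range_self x⟩ = g x := by
    simp only [L₀, LinearMap.comp_apply, LinearEquiv.coe_coe]
    rw [f.quotKerEquivRange_symm_apply_image x]
    rfl
  let L : LinearMap.range f →ₗᵢ[𝕜] H :=
    { L₀ with norm_map' := by rintro ⟨_, x, rfl⟩; exact (hL₀ x).symm ▸ hnorm x }
  let e : H ≃ₗᵢ[𝕜] H := L.extend.toLinearIsometryEquiv rfl
  refine ⟨Unitary.linearIsometryEquiv.symm e, SetLike.coe_mem _, ext fun x ↦ ?_⟩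
  exact ((L.extend_apply ⟨f x, f.mem_range_self x⟩).trans (hL₀ x)).symm

end ContinuousLinearMap

namespace Matrix

variable {n 𝕜 : Type*} [Fintype n] [RCLike 𝕜]

theorem PosSemidef.trace_mul_nonneg_of_isStarProjection {X P : Matrix n n 𝕜} (hX : X.PosSemidef)
    (hP : IsStarProjection P) : 0 ≤ (X * P).trace := by
  have hPH : Pᴴ = P := hP.isSelfAdjoint.star_eq
  have h : (X * P).trace = (P * X * Pᴴ).trace := by
    rw [trace_mul_cycle, hPH, hP.isIdempotentElem.eq, trace_mul_comm]
  exact h ▸ (hX.mul_mul_conjTranspose_same P).trace_nonneg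

variable [DecidableEq n]

theorem exists_mem_unitaryGroup_mul_eq_of_conjTranspose_mul_self_eq {X Y : Matrix n n 𝕜}
    (h : Xᴴ * X = Yᴴ * Y) : ∃ U ∈ unitaryGroup n 𝕜, Y = U * X := by
  let Φ := toEuclideanCLM (n := n) (𝕜 := 𝕜)
  obtain ⟨u, hu, hY⟩ := ContinuousLinearMap.exists_mem_unitary_mul_eq_of_star_mul_self_eq
    (T := Φ X) (S := Φ Y) (by simp only [← map_star, ← map_mul, star_eq_conjTranspose, h])
  refine ⟨Φ.symm u, Unitary.map_mem _ hu, ?_⟩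
  rw [← Φ.symm_apply_apply Y, hY, map_mul, Φ.symm_apply_apply]

theorem exists_mem_unitaryGroup_eq_mul_sqrt (M : Matrix n n 𝕜) :
    ∃ U ∈ unitaryGroup n 𝕜, M = U * (posSemidef_conjTranspose_mul_self M).sqrt := by
  have hP := (posSemidef_conjTranspose_mul_self M).posSemidef_sqrt
  refine exists_mem_unitaryGroup_mul_eq_of_conjTranspose_mul_self_eq ?_
  rw [hP.isHermitian.eq, PosSemidef.sqrt_mul_self]

/- Cauchy–Schwarz for the Hilbert–Schmidt inner product `⟪X, Y⟫ = tr(Y * 1 * Xᴴ)`, which is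
`toMatrixInnerProductSpace 1`. -/
theorem norm_trace_conjTranspose_mul_le (X Y : Matrix n n 𝕜) :
    ‖(Xᴴ * Y).trace‖ ≤ √(RCLike.re (Xᴴ * X).trace) * √(RCLike.re (Yᴴ * Y).trace) := by
  let _ := toMatrixSeminormedAddCommGroup (1 : Matrix n n 𝕜) PosSemidef.one
  let _ := toMatrixInnerProductSpace (1 : Matrix n n 𝕜) PosSemidef.one
  have hnorm (Z : Matrix n n 𝕜) : ‖Z‖ = √(RCLike.re (Zᴴ * Z).trace) := by
    rw [norm_eq_sqrt_re_inner (𝕜 := 𝕜), trace_mul_comm]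
    change √(RCLike.re (Z * 1 * Zᴴ).trace) = _
    rw [Matrix.mul_one]
  have hinner : (Xᴴ * Y).trace = inner 𝕜 X Y := by
    rw [trace_mul_comm]
    exact congrArg trace (by rw [Matrix.mul_one])
  rw [hinner, ← hnorm, ← hnorm]
  exact norm_inner_le_norm X Y

theorem PosSemidef.norm_trace_mul_le_re_trace {P U : Matrix n n 𝕜} (hP : P.PosSemidef)
    (hU : U ∈ unitaryGroup n 𝕜) : ‖(U * P).trace‖ ≤ RCLike.re P.trace := by
  set Q := hP.sqrt
  have hQ : Qᴴ = Q := hP.posSemidef_sqrt.isHermitian.eq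
  have hQQ : Q * Q = P := hP.sqrt_mul_self
  have hUU : U * Uᴴ = 1 := mem_unitaryGroup_iff.mp hU
  have h1 : (U * P).trace = (Qᴴ * (Q * U)).trace := by
    rw [hQ, ← Matrix.mul_assoc, hQQ, trace_mul_comm]
  have h2 : ((Q * U)ᴴ * (Q * U)).trace = P.trace := by
    rw [conjTranspose_mul, hQ, trace_mul_comm, Matrix.mul_assoc, ← Matrix.mul_assoc U,
      hUU, Matrix.one_mul, hQQ]
  rw [h1]
  refine (norm_trace_conjTranspose_mul_le _ _).trans_eq ?_
  rw [hQ, hQQ, h2, Real.mul_self_sqrt (RCLike.nonneg_iff.mp hP.trace_nonneg).1]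

theorem IsStarProjection.norm_trace_mul_mul_le {P : Matrix n n 𝕜} (hP : IsStarProjection P)
    (X Y : Matrix n n 𝕜) :
    ‖(X * P * Y).trace‖ ≤
      √(RCLike.re (Xᴴ * X * P).trace) * √(RCLike.re (Y * Yᴴ * P).trace) := by
  have hPH : Pᴴ = P := hP.isSelfAdjoint.star_eq
  have hPP : P * P = P := hP.isIdempotentElem.eq
  have h1 : X * P * Y = (P * Xᴴ)ᴴ * (P * Y) := by
    rw [conjTranspose_mul, conjTranspose_conjTranspose, hPH, Matrix.mul_assoc X P (P * Y),
      ← Matrix.mul_assoc P P Y, hPP, Matrix.mul_assoc]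
  have h2 : ((P * Xᴴ)ᴴ * (P * Xᴴ)).trace = (Xᴴ * X * P).trace := by
    rw [conjTranspose_mul, conjTranspose_conjTranspose, hPH, Matrix.mul_assoc X P (P * Xᴴ),
      ← Matrix.mul_assoc P P Xᴴ, hPP, trace_mul_comm, Matrix.mul_assoc, trace_mul_comm P]
  have h3 : ((P * Y)ᴴ * (P * Y)).trace = (Y * Yᴴ * P).trace := by
    rw [conjTranspose_mul, hPH, Matrix.mul_assoc, ← Matrix.mul_assoc P P Y, hPP, trace_mul_comm,
      Matrix.mul_assoc, trace_mul_comm P]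
  rw [h1, ← h2, ← h3]
  exact norm_trace_conjTranspose_mul_le _ _

end Matrix

section TraceNorm

variable {n : Type*} [Fintype n] [DecidableEq n]

theorem exists_mem_unitaryGroup_traceNorm_eq_re_trace (M : Matrix n n ℂ) :
    ∃ U ∈ unitaryGroup n ℂ, traceNorm M = (U * M).trace.re := by
  obtain ⟨V, hV, hM⟩ := exists_mem_unitaryGroup_eq_mul_sqrt M
  refine ⟨star V, Unitary.star_mem hV, ?_⟩
  conv_rhs => rw [hM, ← Matrix.mul_assoc, Unitary.star_mul_self_of_mem hV, Matrix.one_mul]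
  rfl

theorem norm_trace_mul_le_traceNorm {U : Matrix n n ℂ} (hU : U ∈ unitaryGroup n ℂ)
    (M : Matrix n n ℂ) : ‖(U * M).trace‖ ≤ traceNorm M := by
  obtain ⟨V, hV, hM⟩ := exists_mem_unitaryGroup_eq_mul_sqrt M
  conv_lhs => rw [hM, ← Matrix.mul_assoc]
  exact (posSemidef_conjTranspose_mul_self M).posSemidef_sqrt.norm_trace_mul_le_re_trace
    (mul_mem hU hV)

theorem traceNorm_nonneg (M : Matrix n n ℂ) : 0 ≤ traceNorm M :=
  (norm_nonneg _).trans <| by simpa using norm_trace_mul_le_traceNorm (one_mem _) M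

theorem norm_trace_mul_mul_conjTranspose_le {U X Y : Matrix n n ℂ} (hU : U ∈ unitaryGroup n ℂ)
    {c : ℝ} (hc : 0 ≤ c) (h : Yᴴ * Y = (c ^ 2 : ℂ) • (Xᴴ * X)) (Z : Matrix n n ℂ) :
    ‖(U * Z * Yᴴ).trace‖ ≤ c * traceNorm (Z * Xᴴ) := by
  obtain ⟨W, hW, hY⟩ := exists_mem_unitaryGroup_mul_eq_of_conjTranspose_mul_self_eq
    (X := (c : ℂ) • X) (Y := Y) (by
      rw [h, conjTranspose_smul, smul_mul_smul_comm, Complex.star_def, Complex.conj_ofReal, sq])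
  have htr : (U * Z * Yᴴ).trace = c * (star W * U * (Z * Xᴴ)).trace := by
    rw [hY, conjTranspose_mul, conjTranspose_smul, Complex.star_def, Complex.conj_ofReal,
      Matrix.smul_mul, Matrix.mul_smul, trace_smul, smul_eq_mul, ← Matrix.mul_assoc,
      trace_mul_comm]
    simp only [Matrix.mul_assoc, star_eq_conjTranspose]
  rw [htr, norm_mul, Complex.norm_real, Real.norm_of_nonneg hc]
  exact mul_le_mul_of_nonneg_left
    (norm_trace_mul_le_traceNorm (mul_mem (Unitary.star_mem hW) hU) _) hc

end TraceNorm

section ConditionedState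

variable {n : Type*} [Fintype n] [DecidableEq n] {σ A : Matrix n n ℂ}

theorem norm_trace_mul_mul_sqrt_le_traceNorm_mul_sqrt_cond (hσ : σ.PosSemidef)
    (hA : IsStarProjection A) (hpos : 0 < ((σ * A).trace).re)
    (hcond : (((σ * A).trace)⁻¹ • (A * σ * A)).PosSemidef) {U : Matrix n n ℂ}
    (hU : U ∈ unitaryGroup n ℂ) (Z : Matrix n n ℂ) :
    ‖(U * Z * (A * hσ.sqrt)).trace‖ ≤ √((σ * A).trace.re) * traceNorm (Z * hcond.sqrt) := by
  set t := ((σ * A).trace).re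
  have ht : (σ * A).trace = t := by
    obtain ⟨-, him⟩ := RCLike.nonneg_iff.mp (hσ.trace_mul_nonneg_of_isStarProjection hA)
    exact Complex.ext rfl him
  have hAH : Aᴴ = A := hA.isSelfAdjoint.star_eq
  have hSH : hσ.sqrtᴴ = hσ.sqrt := hσ.posSemidef_sqrt.isHermitian.eq
  have hCH : hcond.sqrtᴴ = hcond.sqrt := hcond.posSemidef_sqrt.isHermitian.eq
  have hSA :
      (hσ.sqrt * A)ᴴ * (hσ.sqrt * A) = ((√t : ℝ) ^ 2 : ℂ) • (hcond.sqrtᴴ * hcond.sqrt) := by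
    rw [hCH, hcond.sqrt_mul_self, ht, smul_smul, ← Complex.ofReal_pow, Real.sq_sqrt hpos.le,
      ← Complex.ofReal_inv, ← Complex.ofReal_mul, mul_inv_cancel₀ hpos.ne', Complex.ofReal_one,
      one_smul, conjTranspose_mul, hAH, hSH, Matrix.mul_assoc, ← Matrix.mul_assoc hσ.sqrt,
      hσ.sqrt_mul_self, Matrix.mul_assoc]
  simpa [hCH, hAH, hSH] using norm_trace_mul_mul_conjTranspose_le hU (Real.sqrt_nonneg t) hSA Z

theorem Matrix.PosSemidef.norm_trace_sqrt_mul_mul_sqrt_mul_le {ρ P U : Matrix n n ℂ}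
    (hρ : ρ.PosSemidef) (hσ : σ.PosSemidef) (hP : IsStarProjection P)
    (hU : U ∈ unitaryGroup n ℂ) :
    ‖(hρ.sqrt * P * (hσ.sqrt * U)).trace‖ ≤ √((ρ * P).trace.re) * √((σ * P).trace.re) := by
  have hUU : U * Uᴴ = 1 := mem_unitaryGroup_iff.mp hU
  have h := hP.norm_trace_mul_mul_le hρ.sqrt (hσ.sqrt * U)
  rwa [hρ.posSemidef_sqrt.isHermitian.eq, hρ.sqrt_mul_self, conjTranspose_mul,
    hσ.posSemidef_sqrt.isHermitian.eq, Matrix.mul_assoc hσ.sqrt, ← Matrix.mul_assoc U, hUU,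
    Matrix.one_mul, hσ.sqrt_mul_self] at h

end ConditionedState

theorem sq_le_add_of_le_sqrt_mul_add_sqrt_mul {F f ε t : ℝ} (hF : 0 ≤ F) (ht : 0 ≤ t)
    (ht1 : t ≤ 1) (hε : 0 ≤ ε) (h : F ≤ √t * f + √ε * √(1 - t)) : F ^ 2 ≤ f ^ 2 + ε := by
  have h1 := Real.sq_sqrt ht
  have h2 := Real.sq_sqrt hε
  have h3 := Real.sq_sqrt (sub_nonneg.mpr ht1)
  nlinarith [pow_le_pow_left₀ hF h 2, sq_nonneg (√t * √ε - √(1 - t) * f)]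

theorem infidelity_cond_le_general {d : ℕ} (ρ σ A : Matrix (Fin d) (Fin d) ℂ)
    (hρ : ρ.PosSemidef)
    (hσ : σ.PosSemidef) (hσ1 : σ.trace = 1)
    (hA : A.IsHermitian) (hA2 : A * A = A)
    (hpos : 0 < ((σ * A).trace).re)
    (hcond : (((σ * A).trace)⁻¹ • (A * σ * A)).PosSemidef) :
    1 - traceNorm (hρ.sqrt * hcond.sqrt) ^ 2 ≤
      (1 - traceNorm (hρ.sqrt * hσ.sqrt) ^ 2) + ((ρ * (1 - A)).trace).re := by
  set R := hρ.sqrt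
  set S := hσ.sqrt
  set t := ((σ * A).trace).re
  set ε := ((ρ * (1 - A)).trace).re
  have hAproj : IsStarProjection A := ⟨hA2, hA⟩
  have hσ1A : ((σ * (1 - A)).trace).re = 1 - t := by
    rw [mul_sub, mul_one, trace_sub, hσ1, Complex.sub_re, Complex.one_re]
  have ht1 : 0 ≤ 1 - t :=
    hσ1A ▸ (RCLike.nonneg_iff.mp (hσ.trace_mul_nonneg_of_isStarProjection hAproj.one_sub)).1
  have hε : 0 ≤ ε :=
    (RCLike.nonneg_iff.mp (hρ.trace_mul_nonneg_of_isStarProjection hAproj.one_sub)).1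
  obtain ⟨U, hU, hF⟩ := exists_mem_unitaryGroup_traceNorm_eq_re_trace (R * S)
  have hsplit :
      (U * (R * S)).trace = (U * R * (A * S)).trace + (R * (1 - A) * (S * U)).trace := by
    rw [← Matrix.mul_assoc (R * (1 - A)), trace_mul_comm _ U, ← trace_add]
    congr 1
    noncomm_ring
  have hterm1 := norm_trace_mul_mul_sqrt_le_traceNorm_mul_sqrt_cond hσ hAproj hpos hcond hU R
  have hterm2 := hρ.norm_trace_sqrt_mul_mul_sqrt_mul_le hσ hAproj.one_sub hU
  rw [hσ1A] at hterm2
  have hFbound : traceNorm (R * S) ≤ √t * traceNorm (R * hcond.sqrt) + √ε * √(1 - t) := by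
    rw [hF, hsplit, Complex.add_re]
    linarith [Complex.re_le_norm (U * R * (A * S)).trace,
      Complex.re_le_norm (R * (1 - A) * (S * U)).trace]
  linarith [sq_le_add_of_le_sqrt_mul_add_sqrt_mul (traceNorm_nonneg _) hpos.le (by linarith) hε
    hFbound]

/-- Gentle sequential measurement step: 1 − F(ρ,σ|A) ≤ (1 − F(ρ,σ)) + tr(ρ(1−A)). -/
theorem infidelity_cond_le {d : ℕ} (ρ σ A : Matrix (Fin d) (Fin d) ℂ)
    (hρ : ρ.PosSemidef) (hρ1 : ρ.trace = 1)
    (hσ : σ.PosSemidef) (hσ1 : σ.trace = 1)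
    (hA : A.IsHermitian) (hA2 : A * A = A)
    (hpos : 0 < ((σ * A).trace).re)
    (hcond : (((σ * A).trace)⁻¹ • (A * σ * A)).PosSemidef) :
    1 - traceNorm (hρ.sqrt * hcond.sqrt) ^ 2 ≤
      (1 - traceNorm (hρ.sqrt * hσ.sqrt) ^ 2) + ((ρ * (1 - A)).trace).re :=
  infidelity_cond_le_general ρ σ A hρ hσ hσ1 hA hA2 hpos hcond
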